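/- With F = [D; I] and 𝒜 = {i : (Fθ)_i ≠ 0} as above, the rank of F_{−𝒜} equals Σ_{k=1}^{T} 𝟙{θ_k = 0} + Σ_{k=2}^{T} 𝟙{θ_k = θ_{k−1} and θ_k ≠ 0}. -/
import Mathlib

open Classical

noncomputable section AuxStmt16

variable (T : ℕ) (θ : Fin T → ℝ)

def ext16 : ℕ → ℝ := fun n => if h : n < T then θ ⟨n, h⟩ else 0

def S16 : Finset ℕ :=
  (Finset.range T).filter
    (fun n => ext16 T θ n ≠ 0 ∧ (n = 0 ∨ ext16 T θ n ≠ ext16 T θ (n - 1)))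

def g16 (y : ℕ → ℝ) : ℕ → ℝ
  | 0 => if ext16 T θ 0 = 0 then 0 else y 0
  | (n+1) => if ext16 T θ (n+1) = 0 then 0
      else if ext16 T θ (n+1) = ext16 T θ n then g16 y n else y (n+1)

theorem g16_add (y z : ℕ → ℝ) (n : ℕ) :
    g16 T θ (y + z) n = g16 T θ y n + g16 T θ z n := by
  induction n with
  | zero => simp only [g16]; split <;> simp
  | succ n ih =>
    simp only [g16]
    split
    · simp
    · split <;> simp [ih]

theorem g16_smul (c : ℝ) (y : ℕ → ℝ) (n : ℕ) :
    g16 T θ (c • y) n = c * g16 T θ y n := by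
  induction n with
  | zero => simp only [g16]; split <;> simp
  | succ n ih =>
    simp only [g16]
    split
    · simp
    · split <;> simp [ih]

theorem g16_zero (y : ℕ → ℝ) (n : ℕ) (h : ext16 T θ n = 0) : g16 T θ y n = 0 := by
  cases n <;> simp [g16, h]

theorem g16_step (y : ℕ → ℝ) (n : ℕ) (h : ext16 T θ (n+1) = ext16 T θ n) :
    g16 T θ y (n+1) = g16 T θ y n := by
  by_cases h0 : ext16 T θ (n+1) = 0
  · rw [g16_zero T θ y (n+1) h0, g16_zero T θ y n (h ▸ h0)]
  · simp only [g16]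
    rw [if_neg h0, if_pos h]

theorem g16_mem (y : ℕ → ℝ) (n : ℕ) (hn : n ∈ S16 T θ) : g16 T θ y n = y n := by
  simp only [S16, Finset.mem_filter, Finset.mem_range] at hn
  obtain ⟨hn1, hn2, hn3⟩ := hn
  cases n with
  | zero => simp [g16, hn2]
  | succ n =>
    rcases hn3 with h | h
    · omega
    · simp only [Nat.add_sub_cancel] at h
      simp [g16, hn2, h]

theorem g16_eq (x : Fin T → ℝ)
    (h1 : ∀ n (h : n < T), θ ⟨n, h⟩ = 0 → x ⟨n, h⟩ = 0)
    (h2 : ∀ n (h : n + 1 < T), θ ⟨n+1, h⟩ = θ ⟨n, by omega⟩ → x ⟨n+1, h⟩ = x ⟨n, by omega⟩)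
    (n : ℕ) (hn : n < T) :
    g16 T θ (fun m => if m ∈ S16 T θ then ext16 T x m else 0) n = x ⟨n, hn⟩ := by
  induction n with
  | zero =>
    by_cases h0 : ext16 T θ 0 = 0
    · rw [g16_zero T θ _ 0 h0]
      rw [ext16, dif_pos hn] at h0
      exact (h1 0 hn h0).symm
    · have hmem : 0 ∈ S16 T θ := by
        simp [S16, Finset.mem_filter, Finset.mem_range, h0]; omega
      rw [g16_mem T θ _ 0 hmem]
      simp [hmem, ext16, hn]
  | succ n ih =>
    have hn' : n < T := by omega
    by_cases h0 : ext16 T θ (n+1) = 0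
    · rw [g16_zero T θ _ (n+1) h0]
      rw [ext16, dif_pos hn] at h0
      exact (h1 (n+1) hn h0).symm
    · by_cases heq : ext16 T θ (n+1) = ext16 T θ n
      · rw [g16_step T θ _ n heq, ih hn']
        rw [ext16, ext16, dif_pos hn, dif_pos hn'] at heq
        exact (h2 n hn heq).symm
      · have hmem : n + 1 ∈ S16 T θ := by
          simp only [S16, Finset.mem_filter, Finset.mem_range, Nat.add_sub_cancel]
          exact ⟨hn, h0, Or.inr heq⟩
        rw [g16_mem T θ _ (n+1) hmem]
        simp [hmem, ext16, hn]

end AuxStmt16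

set_option maxHeartbeats 2000000 in
open Classical in
theorem stmt_16 (T : ℕ) (hT : 2 ≤ T)
    (D : Matrix (Fin (T - 1)) (Fin T) ℝ)
    (hD : ∀ k t, D k t = if t.val = k.val then 1
        else if t.val = k.val + 1 then -1 else 0)
    (θ : Fin T → ℝ)
    (F : Matrix (Fin (T - 1) ⊕ Fin T) (Fin T) ℝ)
    (hF : F = Matrix.fromRows D (1 : Matrix (Fin T) (Fin T) ℝ)) :
    (F.submatrix (fun i : {i // F.mulVec θ i = 0} => i.1) id).rank =
      (∑ k : Fin T, if θ k = 0 then 1 else 0) +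
        ∑ k : Fin (T - 1),
          if θ ⟨k.val + 1, by omega⟩ = θ ⟨k.val, by omega⟩ ∧
              θ ⟨k.val + 1, by omega⟩ ≠ 0 then 1 else 0 := by
  set M := F.submatrix (fun i : {i // F.mulVec θ i = 0} => i.1) id with hM
  -- mulVec computations
  have hmulD : ∀ (v : Fin T → ℝ) (k : Fin (T-1)),
      F.mulVec v (Sum.inl k) = v ⟨k.val, by omega⟩ - v ⟨k.val+1, by omega⟩ := by
    intro v k
    have hka : (k : ℕ) < T := by omega
    have hkb : (k : ℕ) + 1 < T := by omega
    have hptw : ∀ t : Fin T, D k t * v t =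
        (if t = (⟨k.val, hka⟩ : Fin T) then v t else 0)
          - (if t = (⟨k.val+1, hkb⟩ : Fin T) then v t else 0) := by
      intro t
      rw [hD]
      rcases eq_or_ne t ⟨k.val, hka⟩ with h1 | h1
      · subst h1
        simp [Fin.ext_iff]
      · rcases eq_or_ne t ⟨k.val+1, hkb⟩ with h2 | h2
        · subst h2
          simp [Fin.ext_iff]
        · have n1 : (t:ℕ) ≠ (k:ℕ) := fun h => h1 (Fin.ext h)
          have n2 : (t:ℕ) ≠ (k:ℕ)+1 := fun h => h2 (Fin.ext h)
          simp [n1, n2, h1, h2]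
    have e1 : F.mulVec v (Sum.inl k) = ∑ t, D k t * v t := by
      rw [hF]
      simp [Matrix.mulVec, dotProduct]
    rw [e1, Finset.sum_congr rfl (fun t _ => hptw t), Finset.sum_sub_distrib]
    simp [Finset.sum_ite_eq']
  have hmulI : ∀ (v : Fin T → ℝ) (k : Fin T), F.mulVec v (Sum.inr k) = v k := by
    intro v k
    rw [hF]
    have e1 : (Matrix.fromRows D (1 : Matrix (Fin T) (Fin T) ℝ)).mulVec v (Sum.inr k)
        = (1 : Matrix (Fin T) (Fin T) ℝ).mulVec v k := by
      simp [Matrix.mulVec, dotProduct]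
    rw [e1, Matrix.one_mulVec]
  -- kernel characterization
  have hker : ∀ x : Fin T → ℝ, x ∈ LinearMap.ker M.mulVecLin ↔
      ((∀ (n : ℕ) (h : n < T), θ ⟨n,h⟩ = 0 → x ⟨n,h⟩ = 0) ∧
       (∀ (n : ℕ) (h : n+1 < T), θ ⟨n+1,h⟩ = θ ⟨n, by omega⟩ →
          x ⟨n+1,h⟩ = x ⟨n, by omega⟩)) := by
    intro x
    rw [LinearMap.mem_ker, Matrix.mulVecLin_apply, funext_iff]
    constructor
    · intro h
      constructor
      · intro n hn h0
        have hr : F.mulVec θ (Sum.inr ⟨n, hn⟩) = 0 := by rw [hmulI]; exact h0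
        have h3 : F.mulVec x (Sum.inr ⟨n, hn⟩) = 0 := h ⟨Sum.inr ⟨n, hn⟩, hr⟩
        rwa [hmulI] at h3
      · intro n hn heq
        have hn' : n < T - 1 := by omega
        have hr : F.mulVec θ (Sum.inl ⟨n, hn'⟩) = 0 := by
          rw [hmulD, sub_eq_zero]
          exact heq.symm
        have h3 : F.mulVec x (Sum.inl ⟨n, hn'⟩) = 0 := h ⟨Sum.inl ⟨n, hn'⟩, hr⟩
        rw [hmulD, sub_eq_zero] at h3
        exact h3.symm
    · rintro ⟨h1, h2⟩ ⟨i, hi⟩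
      show F.mulVec x i = 0
      match i with
      | Sum.inl k =>
        rw [hmulD] at hi ⊢
        rw [sub_eq_zero] at hi ⊢
        exact (h2 k.val (by omega) hi.symm).symm
      | Sum.inr k =>
        rw [hmulI] at hi ⊢
        exact h1 k.val k.isLt hi
  have hSlt : ∀ s : ℕ, s ∈ S16 T θ → s < T := by
    intro s hs
    simp only [S16, Finset.mem_filter, Finset.mem_range] at hs
    exact hs.1
  -- linear equivalence between kernel and functions on S16
  let E : (LinearMap.ker M.mulVecLin) ≃ₗ[ℝ] (↥(S16 T θ) → ℝ) :=
    { toFun := fun x s => x.1 ⟨s.1, hSlt s.1 s.2⟩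
      map_add' := fun x y => rfl
      map_smul' := fun c x => rfl
      invFun := fun y =>
        ⟨fun k => g16 T θ (fun m => if h : m ∈ S16 T θ then y ⟨m, h⟩ else 0) k.val, by
          rw [hker]
          constructor
          · intro n hn h0
            exact g16_zero T θ _ n (by rw [ext16, dif_pos hn]; exact h0)
          · intro n hn heq
            exact g16_step T θ _ n
              (by rw [ext16, ext16, dif_pos hn, dif_pos (by omega : n < T)]; exact heq)⟩
      left_inv := by
        intro x
        apply Subtype.ext
        funext k
        show g16 T θ _ k.val = x.1 k
        have hx := (hker x.1).mp x.2
        have hfun : (fun m => if h : m ∈ S16 T θ then x.1 ⟨m, hSlt m h⟩ else 0)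
            = (fun m => if m ∈ S16 T θ then ext16 T x.1 m else 0) := by
          funext m
          by_cases hm : m ∈ S16 T θ
          · rw [dif_pos hm, if_pos hm, ext16, dif_pos (hSlt m hm)]
          · rw [dif_neg hm, if_neg hm]
        rw [hfun]
        exact g16_eq T θ x.1 hx.1 hx.2 k.val k.isLt
      right_inv := by
        intro y
        funext s
        show g16 T θ _ s.1 = y s
        rw [g16_mem T θ _ s.1 s.2, dif_pos s.2] }
  have hkerrank : Module.finrank ℝ (LinearMap.ker M.mulVecLin) = (S16 T θ).card := by
    rw [E.finrank_eq, Module.finrank_pi, Fintype.card_coe]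
  have hrn := LinearMap.finrank_range_add_finrank_ker (M.mulVecLin)
  rw [Module.finrank_fin_fun, hkerrank] at hrn
  have hrank : M.rank + (S16 T θ).card = T := hrn
  -- counting
  have hAB : ((∑ k : Fin T, if θ k = 0 then 1 else 0) +
        ∑ k : Fin (T - 1),
          if θ ⟨k.val + 1, by omega⟩ = θ ⟨k.val, by omega⟩ ∧
              θ ⟨k.val + 1, by omega⟩ ≠ 0 then 1 else 0) + (S16 T θ).card = T := by
    have hA : (∑ k : Fin T, if θ k = 0 then 1 else 0)
        = ∑ n ∈ Finset.range T, (if ext16 T θ n = 0 then 1 else 0) := by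
      rw [← Fin.sum_univ_eq_sum_range (fun n => if ext16 T θ n = 0 then 1 else 0) T]
      apply Finset.sum_congr rfl
      intro k _
      have he : ext16 T θ k.val = θ k := by rw [ext16, dif_pos k.isLt]
      by_cases h : θ k = 0 <;> simp [h, he]
    have hB : (∑ k : Fin (T - 1),
          if θ ⟨k.val + 1, by omega⟩ = θ ⟨k.val, by omega⟩ ∧
              θ ⟨k.val + 1, by omega⟩ ≠ 0 then 1 else 0)
        = ∑ n ∈ Finset.range (T-1),
            (if ext16 T θ (n+1) = ext16 T θ n ∧ ext16 T θ (n+1) ≠ 0 then 1 else 0) := by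
      rw [← Fin.sum_univ_eq_sum_range
          (fun n => if ext16 T θ (n+1) = ext16 T θ n ∧ ext16 T θ (n+1) ≠ 0 then 1 else 0) (T-1)]
      apply Finset.sum_congr rfl
      intro k _
      have h1 : (k:ℕ) + 1 < T := by omega
      have h2 : (k:ℕ) < T := by omega
      have he1 : ext16 T θ ((k:ℕ)+1) = θ ⟨(k:ℕ)+1, h1⟩ := by rw [ext16, dif_pos h1]
      have he2 : ext16 T θ (k:ℕ) = θ ⟨(k:ℕ), h2⟩ := by rw [ext16, dif_pos h2]
      by_cases h : θ ⟨(k:ℕ)+1, h1⟩ = θ ⟨(k:ℕ), h2⟩ ∧ θ ⟨(k:ℕ)+1, h1⟩ ≠ 0 <;>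
        simp [h, he1, he2]
    have hC : (S16 T θ).card = ∑ n ∈ Finset.range T,
        (if ext16 T θ n ≠ 0 ∧ (n = 0 ∨ ext16 T θ n ≠ ext16 T θ (n-1)) then 1 else 0) := by
      rw [S16, Finset.card_filter]
    have hBshift : (∑ n ∈ Finset.range T,
          (if ¬ n = 0 ∧ ext16 T θ n = ext16 T θ (n-1) ∧ ext16 T θ n ≠ 0 then 1 else 0))
        = ∑ n ∈ Finset.range (T-1),
            (if ext16 T θ (n+1) = ext16 T θ n ∧ ext16 T θ (n+1) ≠ 0 then 1 else 0) := by
      have hr : Finset.range T = Finset.range ((T-1)+1) := by congr 1; omega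
      rw [hr, Finset.sum_range_succ']
      simp only [Nat.add_sub_cancel, Nat.succ_ne_zero, not_false_iff, true_and]
      simp
    rw [hA, hB, hC, ← hBshift, ← Finset.sum_add_distrib, ← Finset.sum_add_distrib]
    have hpt : ∀ n : ℕ, ((if ext16 T θ n = 0 then 1 else 0) +
        (if ¬ n = 0 ∧ ext16 T θ n = ext16 T θ (n-1) ∧ ext16 T θ n ≠ 0 then 1 else 0)) +
        (if ext16 T θ n ≠ 0 ∧ (n = 0 ∨ ext16 T θ n ≠ ext16 T θ (n-1)) then 1 else 0) = 1 := by
      intro n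
      by_cases h0 : ext16 T θ n = 0
      · simp [h0]
      · by_cases hn : n = 0
        · subst hn; simp [h0]
        · by_cases he : ext16 T θ n = ext16 T θ (n-1)
          · have h0' : ext16 T θ (n-1) ≠ 0 := fun hh => h0 (he.trans hh)
            simp [h0, hn, he, h0']
          · simp [h0, hn, he]
    rw [Finset.sum_congr rfl (fun n _ => hpt n)]
    simp
  omega
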